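/- arXiv:1807.00589 — 4 statements merged into one kernel-verified Lean document; each statement's English description precedes it below -/
import Mathlib

section
/- Let S be a finite set, R ≥ 2, m a positive integer, and f₁, …, f_R : S → ℝ strictly positive. Over all integer tuples (N₁, …, N_R) with N_l ≥ 0 and ∑_l N_l = m, the maximum of F(N₁,…,N_R) = ∑_{s ∈ S} ∏_{l=1}^{R} f_l(s)^{N_l} is attained at some tuple where N_l = m for a single index l and all other N_{l'} = 0. -/
theorem stmt_4 {S : Type*} [Fintype S] (R : ℕ) (hR : 2 ≤ R)
    (m : ℕ) (hm : 0 < m)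
    (f : Fin R → S → ℝ) (hf : ∀ l s, 0 < f l s)
    (F : (Fin R → ℕ) → ℝ)
    (hF : ∀ N, F N = ∑ s : S, ∏ l : Fin R, f l s ^ N l) :
    ∃ l : Fin R,
      (∑ l', (fun l' => if l' = l then m else 0) l') = m ∧
      ∀ N : Fin R → ℕ, (∑ l', N l') = m →
        F N ≤ F (fun l' => if l' = l then m else 0) := by
  have hR0 : 0 < R := by omega
  haveI : Nonempty (Fin R) := ⟨⟨0, hR0⟩⟩
  set g : Fin R → ℝ := fun l => ∑ s : S, f l s ^ m with hg
  obtain ⟨l, -, hlmax⟩ := Finset.exists_max_image Finset.univ g ⟨⟨0, hR0⟩, Finset.mem_univ _⟩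
  have hvert : ∀ l₀ : Fin R, F (fun l' => if l' = l₀ then m else 0) = g l₀ := by
    intro l₀
    rw [hF]
    refine Finset.sum_congr rfl fun s _ => ?_
    rw [Finset.prod_eq_single l₀]
    · simp
    · intro b _ hb; simp [hb]
    · simp
  refine ⟨l, by simp, fun N hN => ?_⟩
  rw [hF, hvert]
  have key : ∀ s : S, ∏ l' : Fin R, f l' s ^ N l' ≤
      ∑ l' : Fin R, ((N l' : ℝ) / m) * f l' s ^ m := by
    intro s
    have := Real.geom_mean_le_arith_mean_weighted Finset.univ
      (fun l' => (N l' : ℝ) / m) (fun l' => f l' s ^ m)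
      (fun i _ => by positivity)
      (by
        rw [← Finset.sum_div]
        rw [div_eq_one_iff_eq (by exact_mod_cast hm.ne')]
        exact_mod_cast hN)
      (fun i _ => le_of_lt (by exact pow_pos (hf i s) m))
    refine le_trans (le_of_eq ?_) this
    refine Finset.prod_congr rfl fun i _ => ?_
    show f i s ^ N i = (f i s ^ m) ^ ((N i : ℝ) / m)
    rw [← Real.rpow_natCast (f i s) m,
      ← Real.rpow_natCast (f i s) (N i), ← Real.rpow_mul (hf i s).le]
    congr 1
    field_simp
  calc ∑ s : S, ∏ l' : Fin R, f l' s ^ N l'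
      ≤ ∑ s : S, ∑ l' : Fin R, ((N l' : ℝ) / m) * f l' s ^ m :=
        Finset.sum_le_sum fun s _ => key s
    _ = ∑ l' : Fin R, ((N l' : ℝ) / m) * g l' := by
        rw [Finset.sum_comm]
        exact Finset.sum_congr rfl fun l' _ => by rw [← Finset.mul_sum]
    _ ≤ ∑ l' : Fin R, ((N l' : ℝ) / m) * g l' .. := le_refl _
    _ ≤ g l := by
        calc ∑ l' : Fin R, ((N l' : ℝ) / m) * g l'
            ≤ ∑ l' : Fin R, ((N l' : ℝ) / m) * g l :=
              Finset.sum_le_sum fun i _ => by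
                exact mul_le_mul_of_nonneg_left (hlmax i (Finset.mem_univ i)) (by positivity)
          _ = g l := by
              rw [← Finset.sum_mul, ← Finset.sum_div,
                (by exact_mod_cast hN : (∑ l' : Fin R, (N l' : ℝ)) = (m : ℝ)),
                div_self (by exact_mod_cast hm.ne'), one_mul]
end

section
/- Let V = {v₁, …, v_R} with R ≥ 2, S finite, Θ : V × S → ℝ with Θ(v, s) > 0 for all v, s, and m a positive integer. Define W(q) = ∑_{s ∈ S} ∏_{j=1}^{m} Θ(q_j, s) for q ∈ V^m. Then W attains its maximum over V^m at some constant tuple, i.e., there exists v ∈ V such that W(v, v, …, v) = max_{q ∈ V^m} W(q). -/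
/-- AM-GM consequence: for positive reals `a : Fin m → ℝ`,
`∏ j, a j ≤ (1/m) * ∑ j, (a j)^m`. -/
lemma prod_le_inv_mul_sum_pow {m : ℕ} (hm : 0 < m) (a : Fin m → ℝ)
    (ha : ∀ j, 0 < a j) :
    ∏ j, a j ≤ (m : ℝ)⁻¹ * ∑ j, a j ^ m := by
  have hm' : (m : ℝ) ≠ 0 := Nat.cast_ne_zero.mpr hm.ne'
  have h := Real.geom_mean_le_arith_mean_weighted Finset.univ
      (fun _ => (m : ℝ)⁻¹) (fun j => a j ^ m)
      (fun i _ => inv_nonneg.mpr (Nat.cast_nonneg m)) ?_ (fun i _ => pow_nonneg (ha i).le m)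
  · have hL : ∀ j : Fin m, (a j ^ m) ^ ((m : ℝ)⁻¹) = a j := by
      intro j
      rw [← Real.rpow_natCast (a j) m, ← Real.rpow_mul (ha j).le,
        mul_inv_cancel₀ hm', Real.rpow_one]
    calc ∏ j, a j = ∏ j, (a j ^ m) ^ ((m : ℝ)⁻¹) := by
          simp [hL]
      _ ≤ ∑ j, (m : ℝ)⁻¹ * a j ^ m := h
      _ = (m : ℝ)⁻¹ * ∑ j, a j ^ m := by rw [Finset.mul_sum]
  · simp [Finset.card_univ, hm']

theorem stmt_9 {V S : Type*} [Fintype V] [Fintype S] [Nonempty V]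
    (hR : 2 ≤ Fintype.card V)
    (Θ : V → S → ℝ) (hΘ : ∀ v s, 0 < Θ v s)
    (m : ℕ) (hm : 0 < m)
    (W : (Fin m → V) → ℝ)
    (hW : ∀ q, W q = ∑ s : S, ∏ j : Fin m, Θ (q j) s) :
    ∃ v : V, ∀ q : Fin m → V, W q ≤ W (fun _ => v) := by
  set f : V → ℝ := fun v => ∑ s : S, Θ v s ^ m with hf
  obtain ⟨v, -, hv⟩ := Finset.exists_max_image (Finset.univ : Finset V) f
    Finset.univ_nonempty
  refine ⟨v, fun q => ?_⟩
  have hconst : W (fun _ => v) = f v := by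
    rw [hW]
    simp [hf, Finset.prod_const, Finset.card_univ]
  rw [hconst, hW]
  have hm' : (m : ℝ) ≠ 0 := Nat.cast_ne_zero.mpr hm.ne'
  calc ∑ s : S, ∏ j : Fin m, Θ (q j) s
      ≤ ∑ s : S, (m : ℝ)⁻¹ * ∑ j : Fin m, Θ (q j) s ^ m :=
        Finset.sum_le_sum fun s _ =>
          prod_le_inv_mul_sum_pow hm (fun j => Θ (q j) s) (fun j => hΘ _ _)
    _ = (m : ℝ)⁻¹ * ∑ j : Fin m, f (q j) := by
        rw [← Finset.mul_sum, Finset.sum_comm]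
    _ ≤ (m : ℝ)⁻¹ * ∑ _j : Fin m, f v := by
        have : ∑ j : Fin m, f (q j) ≤ ∑ _j : Fin m, f v :=
          Finset.sum_le_sum fun j _ => hv (q j) (Finset.mem_univ _)
        exact mul_le_mul_of_nonneg_left this (inv_nonneg.mpr (Nat.cast_nonneg m))
    _ = f v := by
        simp [Finset.sum_const, Finset.card_univ]
        field_simp
end

section
/- Let R ≥ 2, m > 0, and let F : Δ → ℝ be defined on the simplex Δ = {N ∈ ℝ^R : N_l ≥ 0, ∑ N_l = m} by F(N) = ∑_{s ∈ S} ∏_l f_l(s)^{N_l} with f_l strictly positive on a finite set S. If N* ∈ Δ is a maximizer of F with N*_l > 0 for all l, then for every pair of indices (l, l'), the restriction of F to the segment obtained by varying mass between coordinates l and l' (keeping the others fixed) is convex and hence F also attains its maximum on that segment at one of its endpoints, where one of N_l, N_{l'} is 0. -/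
open Real

private lemma sum_convexOn {ι : Type*} (s : Set ℝ) (hs : Convex ℝ s)
    (t : Finset ι) (g : ι → ℝ → ℝ) (h : ∀ i ∈ t, ConvexOn ℝ s (g i)) :
    ConvexOn ℝ s (fun u => ∑ i ∈ t, g i u) := by
  classical
  induction t using Finset.induction_on with
  | empty => simpa using convexOn_const (0 : ℝ) hs
  | @insert a t' hx ih =>
    simp only [Finset.sum_insert hx]
    exact (h a (Finset.mem_insert_self a t')).add
      (ih fun i hi => h i (Finset.mem_insert_of_mem hi))

theorem stmt_15 {S : Type*} [Fintype S] (R : ℕ) (hR : 2 ≤ R)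
    (m : ℝ) (hm : 0 < m)
    (f : Fin R → S → ℝ) (hf : ∀ l s, 0 < f l s)
    (F : (Fin R → ℝ) → ℝ)
    (hF : ∀ N, F N = ∑ s : S, ∏ l : Fin R, f l s ^ N l)
    (Nstar : Fin R → ℝ) (hN0 : ∀ l, 0 < Nstar l) (hNsum : (∑ l, Nstar l) = m)
    (hNmax : ∀ N : Fin R → ℝ, (∀ l, 0 ≤ N l) → (∑ l, N l) = m → F N ≤ F Nstar)
    (l l' : Fin R) (hll' : l ≠ l') :
    let c := Nstar l + Nstar l'
    let G : ℝ → ℝ := fun u =>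
      F (fun i => if i = l then u else if i = l' then c - u else Nstar i)
    ConvexOn ℝ (Set.Icc (0 : ℝ) c) G ∧
    ∀ u ∈ Set.Icc (0 : ℝ) c, G u ≤ max (G 0) (G c) := by
  intro c G
  have hc : (0 : ℝ) ≤ c := le_of_lt (add_pos (hN0 l) (hN0 l'))
  -- rewrite each summand in exponential form
  have hGeq : G = fun u => ∑ s : S,
      (Real.exp (Real.log (f l' s) * c) *
        ∏ i ∈ (Finset.univ.erase l).erase l', f i s ^ Nstar i) *
        Real.exp (u * (Real.log (f l s) - Real.log (f l' s))) := by
    funext u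
    show F _ = _
    rw [hF]
    refine Finset.sum_congr rfl fun s _ => ?_
    rw [← Finset.mul_prod_erase _ _ (Finset.mem_univ l),
        ← Finset.mul_prod_erase _ _ (Finset.mem_erase.mpr ⟨hll'.symm, Finset.mem_univ l'⟩)]
    have hrest : ∏ i ∈ (Finset.univ.erase l).erase l',
        f i s ^ (if i = l then u else if i = l' then c - u else Nstar i)
        = ∏ i ∈ (Finset.univ.erase l).erase l', f i s ^ Nstar i := by
      refine Finset.prod_congr rfl fun i hi => ?_
      simp only [Finset.mem_erase] at hi
      rw [if_neg hi.2.1, if_neg hi.1]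
    rw [hrest]
    simp only [if_pos rfl, if_neg hll'.symm, if_true]
    rw [Real.rpow_def_of_pos (hf l s), Real.rpow_def_of_pos (hf l' s)]
    generalize (∏ i ∈ (Finset.univ.erase l).erase l', f i s ^ Nstar i) = P
    rw [mul_right_comm, ← mul_assoc, ← Real.exp_add, ← Real.exp_add]
    congr 2
    ring
  have key : ∀ (A d : ℝ), 0 ≤ A →
      ConvexOn ℝ (Set.Icc (0 : ℝ) c) (fun u => A * Real.exp (u * d)) := by
    intro A d hA
    refine ⟨convex_Icc _ _, fun x _ y _ a b ha hb hab => ?_⟩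
    have h := convexOn_exp.2 (Set.mem_univ (x * d)) (Set.mem_univ (y * d)) ha hb hab
    simp only [smul_eq_mul] at h ⊢
    calc A * Real.exp ((a * x + b * y) * d)
        = A * Real.exp (a * (x * d) + b * (y * d)) := by ring_nf
      _ ≤ A * (a * Real.exp (x * d) + b * Real.exp (y * d)) :=
          mul_le_mul_of_nonneg_left h hA
      _ = a * (A * Real.exp (x * d)) + b * (A * Real.exp (y * d)) := by ring
  have hconv : ConvexOn ℝ (Set.Icc (0 : ℝ) c) G := by
    rw [hGeq]
    refine sum_convexOn _ (convex_Icc _ _) _ _ fun s _ => key _ _ ?_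
    exact mul_nonneg (Real.exp_nonneg _)
      (Finset.prod_nonneg fun i _ => Real.rpow_nonneg (hf i s).le _)
  refine ⟨hconv, fun u hu => ?_⟩
  exact hconv.le_on_segment (Set.left_mem_Icc.mpr hc) (Set.right_mem_Icc.mpr hc)
    (by rwa [segment_eq_Icc hc])
end

section
/- Let a, b > 0 and g > 0, and h(N) = ∑_{s∈S} f₁(s)^N f₂(s)^{m−N} g(s) with S finite, f₁, f₂ strictly positive, g non-negative and not identically zero. If f₁(s) = f₂(s) for all s with g(s) > 0, then h is constant on [0, m]; otherwise h is strictly convex on ℝ. -/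
/-!
Writing `f₁ s ^ N * f₂ s ^ (m - N) = f₂ s ^ m * (f₁ s / f₂ s) ^ N`, the function `h` is a
nonnegative combination of exponentials `N ↦ r ^ N` with positive bases `r = f₁ s / f₂ s`.
If every base carrying positive weight equals `1`, every term is constant. Otherwise some term
with positive weight has base `r ≠ 1`, hence is strictly convex, and all other terms are convex.
-/

open Real

section StrictConvexity

variable {𝕜 E β : Type*}

theorem StrictConvexOn.smul_of_pos [CommSemiring 𝕜] [PartialOrder 𝕜] [AddCommMonoid E]
    [AddCommMonoid β] [PartialOrder β] [SMul 𝕜 E] [Module 𝕜 β] [PosSMulStrictMono 𝕜 β]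
    {s : Set E} {f : E → β} {c : 𝕜} (hc : 0 < c) (hf : StrictConvexOn 𝕜 s f) :
    StrictConvexOn 𝕜 s fun x => c • f x :=
  ⟨hf.1, fun x hx y hy hxy a b ha hb hab =>
    calc
      c • f (a • x + b • y) < c • (a • f x + b • f y) :=
        smul_lt_smul_of_pos_left (hf.2 hx hy hxy ha hb hab) hc
      _ = a • c • f x + b • c • f y := by rw [smul_add, smul_comm c, smul_comm c]⟩

theorem StrictConvexOn.sum_of_convexOn [Semiring 𝕜] [PartialOrder 𝕜] [AddCommMonoid E]
    [AddCommMonoid β] [PartialOrder β] [IsOrderedCancelAddMonoid β] [SMul 𝕜 E]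
    [DistribMulAction 𝕜 β] {ι : Type*} {t : Finset ι} {s : Set E} {f : ι → E → β} {i : ι}
    (hstrict : StrictConvexOn 𝕜 s (f i)) (hi : i ∈ t) (hconv : ∀ j ∈ t, ConvexOn 𝕜 s (f j)) :
    StrictConvexOn 𝕜 s fun x => ∑ j ∈ t, f j x :=
  ⟨hstrict.1, fun x hx y hy hxy a b ha hb hab => by
    simp only [Finset.smul_sum, ← Finset.sum_add_distrib]
    exact Finset.sum_lt_sum (fun j hj => (hconv j hj).2 hx hy ha.le hb.le hab)
      ⟨i, hi, hstrict.2 hx hy hxy ha hb hab⟩⟩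

end StrictConvexity

namespace Real

theorem strictConvexOn_rpow_left {b : ℝ} (hb : 0 < b) (hb₁ : b ≠ 1) :
    StrictConvexOn ℝ Set.univ fun x : ℝ => b ^ x := by
  have hlog : log b ≠ 0 := log_ne_zero_of_pos_of_ne_one hb hb₁
  refine ⟨convex_univ, fun x _ y _ hxy a c ha hc hac => ?_⟩
  have hlogxy : log b * x ≠ log b * y := fun h => hxy (mul_left_cancel₀ hlog h)
  simpa only [rpow_def_of_pos hb, smul_eq_mul, mul_add, mul_left_comm (log b)] using
    strictConvexOn_exp.2 (Set.mem_univ _) (Set.mem_univ _) hlogxy ha hc hac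

theorem rpow_mul_rpow_sub {a b : ℝ} (ha : 0 < a) (hb : 0 < b) (m N : ℝ) :
    a ^ N * b ^ (m - N) = b ^ m * (a / b) ^ N := by
  rw [rpow_sub hb, div_rpow ha.le hb.le]
  field_simp

end Real

theorem stmt_18_general {S : Type*} [Fintype S] (f₁ f₂ g : S → ℝ)
    (hf₁ : ∀ s, 0 < f₁ s) (hf₂ : ∀ s, 0 < f₂ s) (hg : ∀ s, 0 ≤ g s)
    (m : ℝ)
    (h : ℝ → ℝ)
    (hh : ∀ N, h N = ∑ s : S, f₁ s ^ N * f₂ s ^ (m - N) * g s) :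
    ((∀ s, 0 < g s → f₁ s = f₂ s) →
        ∀ x ∈ Set.Icc (0 : ℝ) m, ∀ y ∈ Set.Icc (0 : ℝ) m, h x = h y) ∧
    (¬ (∀ s, 0 < g s → f₁ s = f₂ s) → StrictConvexOn ℝ Set.univ h) := by
  obtain rfl : h = fun N => ∑ s, (f₂ s ^ m * g s) * (f₁ s / f₂ s) ^ N := by
    ext N
    rw [hh]
    refine Finset.sum_congr rfl fun s _ => ?_
    rw [rpow_mul_rpow_sub (hf₁ s) (hf₂ s)]
    ring
  refine ⟨fun heq x _ y _ => ?_, fun hne => ?_⟩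
  · refine Finset.sum_congr rfl fun s _ => ?_
    rcases (hg s).eq_or_lt with hg₀ | hg₀
    · simp [← hg₀]
    · simp [heq s hg₀, div_self (hf₂ s).ne']
  · push Not at hne
    obtain ⟨s₀, hg₀, hne₀⟩ := hne
    have hr : ∀ s, 0 < f₁ s / f₂ s := fun s => div_pos (hf₁ s) (hf₂ s)
    have hc : ∀ s, 0 ≤ f₂ s ^ m * g s := fun s => mul_nonneg (rpow_nonneg (hf₂ s).le m) (hg s)
    refine StrictConvexOn.sum_of_convexOn ?_ (Finset.mem_univ s₀)
      fun s _ => (convexOn_rpow_left (hr s)).smul (hc s)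
    exact (strictConvexOn_rpow_left (hr s₀) (div_ne_one_of_ne hne₀)).smul_of_pos
      (mul_pos (rpow_pos_of_pos (hf₂ s₀) m) hg₀)

theorem stmt_18 {S : Type*} [Fintype S] (f₁ f₂ g : S → ℝ)
    (hf₁ : ∀ s, 0 < f₁ s) (hf₂ : ∀ s, 0 < f₂ s) (hg : ∀ s, 0 ≤ g s)
    (hg' : ∃ s, g s ≠ 0)
    (m : ℝ) (hm : 0 < m)
    (h : ℝ → ℝ)
    (hh : ∀ N, h N = ∑ s : S, f₁ s ^ N * f₂ s ^ (m - N) * g s) :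
    ((∀ s, 0 < g s → f₁ s = f₂ s) →
        ∀ x ∈ Set.Icc (0 : ℝ) m, ∀ y ∈ Set.Icc (0 : ℝ) m, h x = h y) ∧
    (¬ (∀ s, 0 < g s → f₁ s = f₂ s) → StrictConvexOn ℝ Set.univ h) :=
  stmt_18_general f₁ f₂ g hf₁ hf₂ hg m h hh
end
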